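/- Let N be an IMLN and let (u_1,…,u_k) and (v_1,…,v_k) be two equivalent compatible sequences of elements of R(N), with associated sequences of IMLNs (N, N_{u_1},…,N_{u_k}) and (N, N'_{v_1},…,N'_{v_k}). Then N_{u_k} and N'_{v_k} are isomorphic. -/

import Mathlib

/-- The data of a rooted binary internally multi-labelled phylogenetic network (IMLN):
a finite directed graph (no parallel arcs, since `Arc` is a relation) with a
distinguished root, leaf labels in `X` and reticulation/elementary labels in `Λ`. -/
structure IMLN (X : Type) (Λ : Type) : Type 1 where
  V : Type
  fintypeV : Fintype V
  Arc : V → V → Prop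
  root : V
  leafLabel : V → X
  retLabel : V → Λ

namespace IMLN

variable {X Λ : Type}

/-- In-degree of a node. -/
noncomputable def inDeg (N : IMLN X Λ) (v : N.V) : ℕ := {u : N.V | N.Arc u v}.ncard

/-- Out-degree of a node. -/
noncomputable def outDeg (N : IMLN X Λ) (v : N.V) : ℕ := {w : N.V | N.Arc v w}.ncard

/-- A leaf: a node of out-degree zero. -/
def IsLeaf (N : IMLN X Λ) (v : N.V) : Prop := N.outDeg v = 0

/-- A reticulation node: in-degree two and out-degree one. -/
def IsRet (N : IMLN X Λ) (v : N.V) : Prop := N.inDeg v = 2 ∧ N.outDeg v = 1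

/-- An elementary node: in-degree at most one and out-degree one. -/
def IsElem (N : IMLN X Λ) (v : N.V) : Prop := N.inDeg v ≤ 1 ∧ N.outDeg v = 1

/-- A tree node: a leaf, or a node of out-degree two (in particular not of out-degree one). -/
def IsTreeNode (N : IMLN X Λ) (v : N.V) : Prop := N.outDeg v ≠ 1

/-- An internal node: a non-leaf. -/
def IsInternal (N : IMLN X Λ) (v : N.V) : Prop := ¬ N.IsLeaf v

/-- Reachability by a (possibly trivial) directed path. -/
def Reaches (N : IMLN X Λ) (u v : N.V) : Prop := Relation.ReflTransGen N.Arc u v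

/-- Well-formedness: `N` is a rooted binary internally multi-labelled phylogenetic network. -/
structure IsIMLN (N : IMLN X Λ) : Prop where
  acyclic : ∀ v : N.V, ¬ Relation.TransGen N.Arc v v
  rootIn : N.inDeg N.root = 0
  rootOut : N.outDeg N.root = 1 ∨ N.outDeg N.root = 2
  uniqueRoot : ∀ v : N.V, N.inDeg v = 0 → v = N.root
  connected : ∀ v : N.V, N.Reaches N.root v
  degrees : ∀ v : N.V, v ≠ N.root →
      (N.inDeg v = 1 ∧ (N.outDeg v = 0 ∨ N.outDeg v = 1 ∨ N.outDeg v = 2)) ∨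
      (N.inDeg v = 2 ∧ N.outDeg v = 1)
  leafSurj : ∀ x : X, ∃ v : N.V, N.IsLeaf v ∧ N.leafLabel v = x
  retInj : ∀ u v : N.V, N.IsRet u → N.IsRet v → N.retLabel u = N.retLabel v → u = v
  retElemLabels : ∀ u v : N.V, N.IsRet u → N.IsElem v → N.retLabel u ≠ N.retLabel v

/-- An internally labelled phylogenetic network: an IMLN with no elementary nodes
whose leaf labelling and reticulation labelling are bijections. -/
def IsILPN (N : IMLN X Λ) : Prop :=
  N.IsIMLN ∧ (∀ v : N.V, ¬ N.IsElem v) ∧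
    (∀ x : X, ∃! v : N.V, N.IsLeaf v ∧ N.leafLabel v = x) ∧
    (∀ l : Λ, ∃! v : N.V, N.IsRet v ∧ N.retLabel v = l)

/-- `u ∈ R_min(N)`: a reticulation node with no reticulation node strictly below it. -/
def IsMinRet (N : IMLN X Λ) (u : N.V) : Prop :=
  N.IsRet u ∧ ∀ w : N.V, N.IsRet w → N.Reaches u w → w = u

/-- The sub-IMLN `N(u)` rooted at `u`. -/
noncomputable def sub (N : IMLN X Λ) (u : N.V) : IMLN X Λ where
  V := {v : N.V // N.Reaches u v}
  fintypeV := @Subtype.fintype _ _ (Classical.decPred _) N.fintypeV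
  Arc a b := N.Arc a.1 b.1
  root := ⟨u, Relation.ReflTransGen.refl⟩
  leafLabel a := N.leafLabel a.1
  retLabel a := N.retLabel a.1

/-- Isomorphism of IMLNs up to a permutation of the leaf labels and of the
internal labels: an arc-preserving bijection relating the labels via `σX`, `σΛ`. -/
def IsomUpTo (σX : Equiv.Perm X) (σΛ : Equiv.Perm Λ) (N₁ N₂ : IMLN X Λ) : Prop :=
  ∃ f : N₁.V ≃ N₂.V,
    (∀ u v : N₁.V, N₁.Arc u v ↔ N₂.Arc (f u) (f v)) ∧
    (∀ v : N₁.V, N₁.IsLeaf v → N₁.leafLabel v = σX (N₂.leafLabel (f v))) ∧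
    (∀ v : N₁.V, N₁.IsRet v ∨ N₁.IsElem v → N₁.retLabel v = σΛ (N₂.retLabel (f v)))

/-- Isomorphism of IMLNs: an arc-preserving bijection preserving leaf labels and
the labels of reticulation and elementary nodes. -/
def Isom (N₁ N₂ : IMLN X Λ) : Prop := IsomUpTo (Equiv.refl X) (Equiv.refl Λ) N₁ N₂

/-- `N'` is the unfolded IMLN `U(N,u)` of `N` at `u`: the arcs from the two parents
`v₁, v₂` of `u` to `u` are deleted, the subnetwork rooted at `u` is duplicated with
all its labels (`g` embeds `N` itself, `g'` embeds the new copy of the subnetwork),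
and arcs from `v₁` to one copy of `u` and from `v₂` to the other copy are added. -/
def IsUnfoldAt (N N' : IMLN X Λ) (u : N.V) : Prop :=
  ∃ g g' : N.V → N'.V,
    Function.Injective g ∧
    (∀ a b : N.V, N.Reaches u a → N.Reaches u b → g' a = g' b → a = b) ∧
    (∀ a b : N.V, N.Reaches u b → g a ≠ g' b) ∧
    (∀ x : N'.V, (∃ a, x = g a) ∨ (∃ a, N.Reaches u a ∧ x = g' a)) ∧
    g N.root = N'.root ∧
    (∀ a : N.V, N'.leafLabel (g a) = N.leafLabel a) ∧
    (∀ a : N.V, N'.retLabel (g a) = N.retLabel a) ∧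
    (∀ a : N.V, N.Reaches u a → N'.leafLabel (g' a) = N.leafLabel a) ∧
    (∀ a : N.V, N.Reaches u a → N'.retLabel (g' a) = N.retLabel a) ∧
    ∃ v₁ v₂ : N.V, v₁ ≠ v₂ ∧ N.Arc v₁ u ∧ N.Arc v₂ u ∧
      ∀ x y : N'.V, N'.Arc x y ↔
        ((∃ a b : N.V, N.Arc a b ∧ b ≠ u ∧ x = g a ∧ y = g b) ∨
         (∃ a b : N.V, N.Reaches u a ∧ N.Reaches u b ∧ N.Arc a b ∧ x = g' a ∧ y = g' b) ∨
         (x = g v₁ ∧ y = g u) ∨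
         (x = g v₂ ∧ y = g' u))

/-- One unfolding step, performed at the (necessarily unique) reticulation node
of `N` labelled `l`, which is required to lie in `R_min(N)`. -/
def UnfoldStep (N N' : IMLN X Λ) (l : Λ) : Prop :=
  ∃ u : N.V, N.IsMinRet u ∧ N.retLabel u = l ∧ IsUnfoldAt N N' u

/-- `IsUnfoldSeq N ls M`: `M` is obtained from `N` by the sequence of unfoldings at
the reticulation nodes labelled by the list `ls` (each minimal at its turn);
this encodes the notion of a compatible sequence and its associated sequence of IMLNs. -/
inductive IsUnfoldSeq : IMLN X Λ → List Λ → IMLN X Λ → Prop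
  | nil (N : IMLN X Λ) : IsUnfoldSeq N [] N
  | cons {N M M' : IMLN X Λ} {l : Λ} {ls : List Λ} :
      UnfoldStep N M l → IsUnfoldSeq M ls M' → IsUnfoldSeq N (l :: ls) M'

/-- A list of reticulation nodes of `N` is a compatible sequence if the associated
sequence of unfoldings exists. -/
def Compatible (N : IMLN X Λ) (us : List N.V) : Prop :=
  (∀ u ∈ us, N.IsRet u) ∧ ∃ M : IMLN X Λ, IsUnfoldSeq N (us.map N.retLabel) M

/-- The order `≤_E` on elementary nodes: `a ≤_E b` iff there are elementary nodes
`a', b'` with the same labels as `a, b` and a directed path from `b` to `a`. -/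
def LE_E (N : IMLN X Λ) (a b : N.V) : Prop :=
  N.IsElem a ∧ N.IsElem b ∧
    ∃ a' b' : N.V, N.IsElem a' ∧ N.IsElem b' ∧
      N.retLabel a' = N.retLabel a ∧ N.retLabel b' = N.retLabel b ∧ N.Reaches b a

/-- `a ∈ E_max(N)`: a maximal elementary node under `≤_E`. -/
def IsEMax (N : IMLN X Λ) (a : N.V) : Prop :=
  N.IsElem a ∧ ∀ b : N.V, N.LE_E a b → b = a

/-- `N'` is the folded IMLN `F(N,u)` of `N` at `u ∈ E_max(N)`: choosing the other
node `v ∈ E_max(N)` with the same label and isomorphic rooted subnetwork, the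
subnetwork rooted at `v` and the arc from the parent `vp` of `v` to `v` are deleted
and the arc `(vp, u)` is added. -/
def IsFoldAt (N N' : IMLN X Λ) (u : N.V) : Prop :=
  N.IsEMax u ∧
  ∃ v : N.V, v ≠ u ∧ N.IsEMax v ∧ N.retLabel v = N.retLabel u ∧
    Isom (N.sub u) (N.sub v) ∧
    ∃ vp : N.V, N.Arc vp v ∧
      ∃ h : N'.V → N.V,
        Function.Injective h ∧
        (∀ x : N'.V, ¬ N.Reaches v (h x)) ∧
        (∀ a : N.V, ¬ N.Reaches v a → ∃ x, h x = a) ∧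
        h N'.root = N.root ∧
        (∀ x : N'.V, N'.leafLabel x = N.leafLabel (h x)) ∧
        (∀ x : N'.V, N'.retLabel x = N.retLabel (h x)) ∧
        (∀ x y : N'.V, N'.Arc x y ↔ (N.Arc (h x) (h y) ∨ (h x = vp ∧ h y = u)))

/-- `IsFoldSeq N ls M`: `M` is obtained from `N` by successively folding at nodes
carrying the labels in the list `ls`. -/
inductive IsFoldSeq : IMLN X Λ → List Λ → IMLN X Λ → Prop
  | nil (N : IMLN X Λ) : IsFoldSeq N [] N
  | cons {N M M' : IMLN X Λ} {l : Λ} {ls : List Λ} :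
      (∃ u : N.V, N.retLabel u = l ∧ IsFoldAt N M u) → IsFoldSeq M ls M' →
      IsFoldSeq N (l :: ls) M'

/-- Pseudo-network condition (i): no reticulation node descends from an elementary node. -/
def PseudoCondI (N : IMLN X Λ) : Prop :=
  ∀ e r : N.V, N.IsElem e → N.IsRet r → ¬ N.Reaches e r

/-- Pseudo-network condition (ii): every node of `E_max(N)` has a mate with the
same label and isomorphic rooted subnetwork. -/
def PseudoCondII (N : IMLN X Λ) : Prop :=
  ∀ u : N.V, N.IsEMax u → ∃ v : N.V, v ≠ u ∧ N.IsEMax v ∧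
    N.retLabel v = N.retLabel u ∧ Isom (N.sub u) (N.sub v)

/-- Fuelled version of the recursive definition of pseudo-networks. -/
def IsPseudoN : ℕ → IMLN X Λ → Prop
  | 0, N => PseudoCondI N ∧ PseudoCondII N
  | n + 1, N => PseudoCondI N ∧ PseudoCondII N ∧
      ∀ (u : N.V) (N' : IMLN X Λ), N.IsEMax u → IsFoldAt N N' u → IsPseudoN n N'

/-- `N` is a pseudo-network: conditions (i) and (ii) hold, and every folding at a
node of `E_max(N)` yields again a pseudo-network. -/
def IsPseudo (N : IMLN X Λ) : Prop := ∀ n : ℕ, IsPseudoN n N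

/-- The polynomial ring `ℤ[x₁,…,xₙ,λ₁,…,λᵣ,y]`, with one variable for each leaf
label, one for each internal label, and one extra variable `y`. -/
abbrev PolyRing (X Λ : Type) := MvPolynomial (X ⊕ (Λ ⊕ Unit)) ℤ

/-- The variable `x_i`. -/
noncomputable def xVar (x : X) : PolyRing X Λ := MvPolynomial.X (Sum.inl x)

/-- The variable `λ_i`. -/
noncomputable def lVar (l : Λ) : PolyRing X Λ := MvPolynomial.X (Sum.inr (Sum.inl l))

/-- The variable `y`. -/
noncomputable def yVar : PolyRing X Λ := MvPolynomial.X (Sum.inr (Sum.inr ()))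

/-- `P` is the polynomial assignment `p` on the nodes of `N`:
`p(u) = φ(u)` on leaves, `p(u) = y + p(v₁)p(v₂)` on internal tree nodes with
children `v₁ ≠ v₂`, and `p(u) = ℓ(u)·p(v)` on nodes with a single child `v`. -/
def IsPolyAssignment (N : IMLN X Λ) (P : N.V → PolyRing X Λ) : Prop :=
  (∀ v : N.V, N.IsLeaf v → P v = xVar (N.leafLabel v)) ∧
  (∀ v v₁ v₂ : N.V, v₁ ≠ v₂ → N.Arc v v₁ → N.Arc v v₂ →
      P v = yVar + P v₁ * P v₂) ∧
  (∀ v w : N.V, N.outDeg v = 1 → N.Arc v w →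
      P v = lVar (N.retLabel v) * P w)

/-- The action `σ·p` of a permutation of the labels (fixing `X` and `Λ` setwise,
and fixing `y`) on polynomials, by renaming variables. -/
noncomputable def permRename (σX : Equiv.Perm X) (σΛ : Equiv.Perm Λ) (p : PolyRing X Λ) : PolyRing X Λ :=
  MvPolynomial.rename (Sum.map (⇑σX) (Sum.map (⇑σΛ) id)) p

/-- A strong path: a directed path all of whose intermediate nodes are elementary
or reticulation nodes.  `StrongReach N u v` says that `u` is a strong ancestor of
`v` (equivalently, `v` is a strong descendant of `u`). -/
inductive StrongReach (N : IMLN X Λ) : N.V → N.V → Prop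
  | refl (u : N.V) : StrongReach N u u
  | single {u v : N.V} : N.Arc u v → StrongReach N u v
  | cons {u w v : N.V} : N.Arc u w → (N.IsElem w ∨ N.IsRet w) →
      StrongReach N w v → StrongReach N u v

/-- `N₁` and `N₂` are equivalent modulo strong paths, with respect to the label
permutation `(σX, σΛ)` and polynomial assignments `P₁`, `P₂`:
(i) `p(N₁) = σ·p(N₂)`; (ii) there is a bijection `f` between the tree nodes
preserving strong descendance; (iii) `p(u) = σ·p(f(u))` for every tree node `u`. -/
def EquivModSP (N₁ N₂ : IMLN X Λ) (P₁ : N₁.V → PolyRing X Λ) (P₂ : N₂.V → PolyRing X Λ)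
    (σX : Equiv.Perm X) (σΛ : Equiv.Perm Λ) : Prop :=
  P₁ N₁.root = permRename σX σΛ (P₂ N₂.root) ∧
  ∃ f : {v : N₁.V // N₁.IsTreeNode v} ≃ {v : N₂.V // N₂.IsTreeNode v},
    (∀ u v : {v : N₁.V // N₁.IsTreeNode v},
        StrongReach N₁ u.1 v.1 → StrongReach N₂ (f u).1 (f v).1) ∧
    (∀ u : {v : N₁.V // N₁.IsTreeNode v}, P₁ u.1 = permRename σX σΛ (P₂ (f u).1))

/-- A tree node `u` is separable if either both of its children are tree nodes, or
some tree node `u₁ ≠ u` is a strong ancestor of one child `c` of `u` and either is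
a strong ancestor of no other strong descendant of `u`, or is also a strong
ancestor of one of the strong descendants of `c`. -/
def IsSeparableNode (N : IMLN X Λ) (u : N.V) : Prop :=
  N.IsTreeNode u → ∀ v₁ v₂ : N.V, v₁ ≠ v₂ → N.Arc u v₁ → N.Arc u v₂ →
    ((N.IsTreeNode v₁ ∧ N.IsTreeNode v₂) ∨
      ∃ u₁ : N.V, u₁ ≠ u ∧ N.IsTreeNode u₁ ∧
        ∃ c : N.V, (c = v₁ ∨ c = v₂) ∧ StrongReach N u₁ c ∧
          ((∀ w : N.V, StrongReach N u w → w ≠ c → ¬ StrongReach N u₁ w) ∨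
           (∃ w : N.V, w ≠ c ∧ StrongReach N c w ∧ StrongReach N u₁ w)))

/-- A network is separable if all its tree nodes are separable. -/
def IsSeparable (N : IMLN X Λ) : Prop := ∀ u : N.V, N.IsSeparableNode u

/-- A (rooted binary) phylogenetic network: an IMLN with no elementary nodes, root
of out-degree two, and bijective leaf labelling (internal labels are ignored). -/
def IsPhyloNet (N : IMLN X Λ) : Prop :=
  N.IsIMLN ∧ (∀ v : N.V, ¬ N.IsElem v) ∧ N.outDeg N.root = 2 ∧
    (∀ x : X, ∃! v : N.V, N.IsLeaf v ∧ N.leafLabel v = x)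

/-- `N'` is obtained from `N` by a single cherry-reduction: either reducing a leaf
`b` of a cherry `{a,b}` (deleting `b` and suppressing the resulting elementary
node, the root moving to `a` if the common parent was the root), or cutting a
reticulated cherry `{a,b}` (deleting the arc `(p_a,p_b)` and suppressing the two
resulting elementary nodes). -/
def IsCherryReduce (N N' : IMLN X Λ) : Prop :=
  (∃ a b pa : N.V, a ≠ b ∧ N.IsLeaf a ∧ N.IsLeaf b ∧ N.Arc pa a ∧ N.Arc pa b ∧
    ∃ h : N'.V → N.V,
      Function.Injective h ∧
      (∀ x : N'.V, h x ≠ b ∧ h x ≠ pa) ∧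
      (∀ c : N.V, c ≠ b → c ≠ pa → ∃ x, h x = c) ∧
      (∀ x : N'.V, N'.leafLabel x = N.leafLabel (h x)) ∧
      ((pa = N.root ∧ h N'.root = a) ∨ (pa ≠ N.root ∧ h N'.root = N.root)) ∧
      (∀ x y : N'.V, N'.Arc x y ↔
        (N.Arc (h x) (h y) ∨ (N.Arc (h x) pa ∧ h y = a)))) ∨
  (∃ a b pa pb : N.V, a ≠ b ∧ N.IsLeaf a ∧ N.IsLeaf b ∧ N.Arc pa a ∧ N.Arc pb b ∧
    N.IsRet pb ∧ N.Arc pa pb ∧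
    ∃ h : N'.V → N.V,
      Function.Injective h ∧
      (∀ x : N'.V, h x ≠ pa ∧ h x ≠ pb) ∧
      (∀ c : N.V, c ≠ pa → c ≠ pb → ∃ x, h x = c) ∧
      (∀ x : N'.V, N'.leafLabel x = N.leafLabel (h x)) ∧
      ((pa = N.root ∧ h N'.root = a) ∨ (pa ≠ N.root ∧ h N'.root = N.root)) ∧
      (∀ x y : N'.V, N'.Arc x y ↔
        (N.Arc (h x) (h y) ∨ (N.Arc (h x) pa ∧ h y = a) ∨ (N.Arc (h x) pb ∧ h y = b))))

/-- A network is orchard if some sequence of cherry-reductions reduces it to a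
single vertex. -/
inductive IsOrchard : IMLN X Λ → Prop
  | single (N : IMLN X Λ) : (∀ v : N.V, v = N.root) → IsOrchard N
  | step {N N' : IMLN X Λ} : IsCherryReduce N N' → IsOrchard N' → IsOrchard N

/-- `ArcPath N u v n`: there is a directed path of length `n` from `u` to `v`. -/
inductive ArcPath (N : IMLN X Λ) : N.V → N.V → ℕ → Prop
  | refl (u : N.V) : ArcPath N u u 0
  | step {u w v : N.V} {n : ℕ} : N.Arc u w → ArcPath N w v n → ArcPath N u v (n + 1)

end IMLN

/-!
Unfolding an IMLN at a minimal reticulation node `u` with parents `v₁, v₂` is, up to an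
isomorphism preserving the root and all labels, the explicit network `unfolding N u v₁ v₂`: `N`
with a second copy of the tree `N(u)` hung from `v₂`. Up to such isomorphism the result does not
depend on the order of the parents, it is again an IMLN, and the other minimal reticulation nodes
stay minimal. For two distinct minimal reticulation nodes `u, w` the trees `N(u)` and `N(w)` are
disjoint, so unfolding at `u` and then at `w` gives the same network as unfolding at `w` and then
at `u`. Any compatible sequence can therefore be reordered, one transposition at a time, to start
with the first node of any other compatible sequence on the same set of nodes, and induction on the
length of the sequences finishes the proof.
-/

namespace IMLN

attribute [local instance] fintypeV

variable {X Λ : Type}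

section Basic

variable {N : IMLN X Λ} {u a b : N.V}

theorem not_arc_of_inDeg_eq_zero (h : N.inDeg b = 0) : ¬ N.Arc a b :=
  Set.eq_empty_iff_forall_notMem.1 ((Set.ncard_eq_zero (Set.toFinite _)).1 h) a

theorem IsIMLN.not_arc_root (hN : N.IsIMLN) : ¬ N.Arc a N.root :=
  not_arc_of_inDeg_eq_zero hN.rootIn

theorem IsIMLN.eq_root_of_reaches_root (hN : N.IsIMLN) (h : N.Reaches a N.root) :
    a = N.root := by
  rcases h.cases_tail with h | ⟨c, -, hc⟩
  · exact h.symm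
  · exact absurd hc hN.not_arc_root

theorem IsIMLN.not_reaches_of_arc (hN : N.IsIMLN) (hab : N.Arc a b) : ¬ N.Reaches b a :=
  fun hba => hN.acyclic a (.head' hab hba)

theorem IsIMLN.outDeg_le_two (hN : N.IsIMLN) (v : N.V) : N.outDeg v ≤ 2 := by
  by_cases hv : v = N.root
  · subst hv
    rcases hN.rootOut with h | h <;> omega
  · rcases hN.degrees v hv with ⟨-, h | h | h⟩ | ⟨-, h⟩ <;> omega

theorem IsRet.ne_root (hN : N.IsIMLN) (hu : N.IsRet u) : u ≠ N.root := by
  rintro rfl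
  have := hu.1
  rw [hN.rootIn] at this
  omega

theorem IsRet.exists_parents (hu : N.IsRet u) : ∃ p q, p ≠ q ∧ N.Arc p u ∧ N.Arc q u := by
  obtain ⟨p, q, hpq, hs⟩ := Set.ncard_eq_two.1 hu.1
  have hmem (x : N.V) : N.Arc x u ↔ x = p ∨ x = q := by simpa using Set.ext_iff.1 hs x
  exact ⟨p, q, hpq, (hmem p).2 (.inl rfl), (hmem q).2 (.inr rfl)⟩

theorem IsRet.arc_iff (hu : N.IsRet u) (hab : a ≠ b) (ha : N.Arc a u) (hb : N.Arc b u)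
    (x : N.V) : N.Arc x u ↔ x = a ∨ x = b := by
  have hsub : ({a, b} : Set N.V) ⊆ {x | N.Arc x u} := by
    rintro x (rfl | rfl)
    exacts [ha, hb]
  have := Set.eq_of_subset_of_ncard_le hsub (by rw [Set.ncard_pair hab]; exact hu.1.le)
  exact (Set.ext_iff.1 this x).symm

theorem IsMinRet.inDeg_eq_one (hN : N.IsIMLN) (hu : N.IsMinRet u) (hb : N.Reaches u b)
    (hbu : b ≠ u) : N.inDeg b = 1 := by
  obtain ⟨c, -, hcb⟩ := hb.cases_tail.resolve_left hbu
  have hroot : b ≠ N.root := by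
    rintro rfl
    exact hN.not_arc_root hcb
  rcases hN.degrees b hroot with ⟨h, -⟩ | hret
  · exact h
  · exact absurd (hu.2 b hret hb) hbu

/-- Below a minimal reticulation node `u` every node other than `u` has a single parent,
so the subnetwork `N(u)` is closed under taking parents. -/
theorem IsMinRet.reaches_of_arc (hN : N.IsIMLN) (hu : N.IsMinRet u) (hb : N.Reaches u b)
    (hbu : b ≠ u) (hab : N.Arc a b) : N.Reaches u a := by
  obtain ⟨c, hc⟩ := Set.ncard_eq_one.1 (hu.inDeg_eq_one hN hb hbu)
  obtain ⟨p, hup, hpb⟩ := hb.cases_tail.resolve_left hbu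
  have hp : p = c := Set.ext_iff.1 hc p |>.1 hpb
  have ha : a = c := Set.ext_iff.1 hc a |>.1 hab
  rwa [ha, ← hp]

theorem IsMinRet.not_reaches_of_reaches {w c : N.V} (hN : N.IsIMLN) (hu : N.IsMinRet u)
    (hw : N.IsMinRet w) (hne : u ≠ w) (hwc : N.Reaches w c) : ¬ N.Reaches u c := by
  induction hwc with
  | refl => exact fun huw => hne (hu.2 w hw.1 huw).symm
  | @tail b c hwb hbc ih =>
    intro huc
    have hcu : c ≠ u := by
      rintro rfl
      exact hne (hw.2 c hu.1 (hwb.tail hbc))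
    exact ih (hu.reaches_of_arc hN huc hcu hbc)

end Basic

/-- Stronger than `Isom`: it also fixes the root and the labels of all nodes, which is what
`IsUnfoldAt` refers to. -/
def RootedIsom (N₁ N₂ : IMLN X Λ) : Prop :=
  ∃ f : N₁.Arc ≃r N₂.Arc, f N₁.root = N₂.root ∧
    (∀ v, N₂.leafLabel (f v) = N₁.leafLabel v) ∧ (∀ v, N₂.retLabel (f v) = N₁.retLabel v)

namespace RootedIsom

variable {N₁ N₂ N₃ : IMLN X Λ}

theorem refl (N : IMLN X Λ) : RootedIsom N N :=
  ⟨.refl _, rfl, fun _ => rfl, fun _ => rfl⟩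

theorem symm (h : RootedIsom N₁ N₂) : RootedIsom N₂ N₁ := by
  obtain ⟨f, hroot, hleaf, hret⟩ := h
  refine ⟨f.symm, by rw [← hroot, RelIso.symm_apply_apply], fun v => ?_, fun v => ?_⟩
  · rw [← hleaf, RelIso.apply_symm_apply]
  · rw [← hret, RelIso.apply_symm_apply]

theorem trans (h : RootedIsom N₁ N₂) (h' : RootedIsom N₂ N₃) : RootedIsom N₁ N₃ := by
  obtain ⟨f, hroot, hleaf, hret⟩ := h
  obtain ⟨g, hroot', hleaf', hret'⟩ := h'
  exact ⟨f.trans g, by simp [hroot, hroot'], fun v => by simp [hleaf, hleaf'],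
    fun v => by simp [hret, hret']⟩

theorem isom (h : RootedIsom N₁ N₂) : Isom N₁ N₂ := by
  obtain ⟨f, -, hleaf, hret⟩ := h
  exact ⟨f.toEquiv, fun u v => f.map_rel_iff.symm, fun v _ => (hleaf v).symm,
    fun v _ => (hret v).symm⟩

end RootedIsom

section RelIso

variable {N₁ N₂ : IMLN X Λ} (f : N₁.Arc ≃r N₂.Arc)

theorem reaches_relIso_iff {a b : N₁.V} : N₂.Reaches (f a) (f b) ↔ N₁.Reaches a b :=
  ⟨fun h => by simpa [Reaches, Function.onFun] using h.lift f.symm fun x y => f.symm.map_rel_iff.2,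
    fun h => h.lift f fun x y => f.map_rel_iff.2⟩

theorem inDeg_relIso (v : N₁.V) : N₂.inDeg (f v) = N₁.inDeg v := by
  have : {x | N₁.Arc x v} = f ⁻¹' {y | N₂.Arc y (f v)} := by ext; exact f.map_rel_iff.symm
  rw [inDeg, inDeg, this, Set.ncard_preimage_of_injective_subset_range f.injective (by
    simp [f.surjective.range_eq])]

theorem outDeg_relIso (v : N₁.V) : N₂.outDeg (f v) = N₁.outDeg v := by
  have : {x | N₁.Arc v x} = f ⁻¹' {y | N₂.Arc (f v) y} := by ext; exact f.map_rel_iff.symm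
  rw [outDeg, outDeg, this, Set.ncard_preimage_of_injective_subset_range f.injective (by
    simp [f.surjective.range_eq])]

theorem isLeaf_relIso_iff (v : N₁.V) : N₂.IsLeaf (f v) ↔ N₁.IsLeaf v := by
  rw [IsLeaf, IsLeaf, outDeg_relIso]

theorem isRet_relIso_iff (v : N₁.V) : N₂.IsRet (f v) ↔ N₁.IsRet v := by
  rw [IsRet, IsRet, inDeg_relIso, outDeg_relIso]

theorem isElem_relIso_iff (v : N₁.V) : N₂.IsElem (f v) ↔ N₁.IsElem v := by
  rw [IsElem, IsElem, inDeg_relIso, outDeg_relIso]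

theorem isMinRet_relIso_iff (v : N₁.V) : N₂.IsMinRet (f v) ↔ N₁.IsMinRet v := by
  simp only [IsMinRet, f.surjective.forall, isRet_relIso_iff, reaches_relIso_iff,
    f.injective.eq_iff]

end RelIso

theorem RootedIsom.isIMLN {N₁ N₂ : IMLN X Λ} (h : RootedIsom N₁ N₂) (h₁ : N₁.IsIMLN) :
    N₂.IsIMLN := by
  obtain ⟨f, hroot, hleaf, hret⟩ := h
  have htrans {a b : N₁.V} (hab : Relation.TransGen N₂.Arc (f a) (f b)) :
      Relation.TransGen N₁.Arc a b := by
    simpa [Function.onFun] using hab.lift f.symm fun x y => f.symm.map_rel_iff.2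
  constructor
  · simpa only [f.surjective.forall] using fun v h => h₁.acyclic v (htrans h)
  · rw [← hroot, inDeg_relIso]; exact h₁.rootIn
  · rw [← hroot, outDeg_relIso]; exact h₁.rootOut
  · simp only [f.surjective.forall, inDeg_relIso, ← hroot, f.injective.eq_iff]
    exact h₁.uniqueRoot
  · simp only [f.surjective.forall, ← hroot, reaches_relIso_iff]
    exact h₁.connected
  · simp only [f.surjective.forall, inDeg_relIso, outDeg_relIso, ← hroot, ne_eq,
      f.injective.eq_iff]
    exact h₁.degrees
  · intro x
    obtain ⟨v, hv, hx⟩ := h₁.leafSurj x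
    exact ⟨f v, (isLeaf_relIso_iff f v).2 hv, by rw [hleaf, hx]⟩
  · simp only [f.surjective.forall, isRet_relIso_iff, hret, f.injective.eq_iff]
    exact h₁.retInj
  · simp only [f.surjective.forall, isRet_relIso_iff, isElem_relIso_iff, hret]
    exact h₁.retElemLabels

theorem IsUnfoldAt.map {N₁ N₂ M : IMLN X Λ} {u : N₁.V} (h : IsUnfoldAt N₁ M u)
    (f : N₁.Arc ≃r N₂.Arc) (hroot : f N₁.root = N₂.root)
    (hleaf : ∀ v, N₂.leafLabel (f v) = N₁.leafLabel v)
    (hret : ∀ v, N₂.retLabel (f v) = N₁.retLabel v) : IsUnfoldAt N₂ M (f u) := by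
  obtain ⟨g, g', hg, hg', hdisj, hcover, hgroot, hgleaf, hgret, hg'leaf, hg'ret,
    v₁, v₂, hv12, hv₁, hv₂, harc⟩ := h
  refine ⟨g ∘ f.symm, g' ∘ f.symm, hg.comp f.symm.injective, ?_, ?_, ?_, ?_, ?_, ?_, ?_, ?_,
    f v₁, f v₂, by simpa using hv12, f.map_rel_iff.2 hv₁, f.map_rel_iff.2 hv₂, ?_⟩
  all_goals simp only [f.surjective.forall, f.surjective.exists, Function.comp_apply,
    RelIso.symm_apply_apply, reaches_relIso_iff, RelIso.map_rel_iff, f.injective.eq_iff,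
    ← hroot, hleaf, hret, ne_eq]
  exacts [hg', hdisj, hcover, hgroot, hgleaf, hgret, hg'leaf, hg'ret, harc]

theorem UnfoldStep.of_rootedIsom {N₁ N₂ M : IMLN X Λ} {l : Λ} (h : UnfoldStep N₁ M l)
    (e : RootedIsom N₁ N₂) : UnfoldStep N₂ M l := by
  obtain ⟨f, hroot, hleaf, hret⟩ := e
  obtain ⟨u, hu, rfl, hunf⟩ := h
  exact ⟨f u, (isMinRet_relIso_iff f u).2 hu, hret u, hunf.map f hroot hleaf hret⟩

theorem IsUnfoldSeq.exists_of_rootedIsom {N₁ N₂ M : IMLN X Λ} {ls : List Λ}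
    (h : IsUnfoldSeq N₁ ls M) (e : RootedIsom N₁ N₂) :
    ∃ M', IsUnfoldSeq N₂ ls M' ∧ RootedIsom M M' := by
  cases h with
  | nil => exact ⟨N₂, .nil N₂, e⟩
  | cons hstep htail => exact ⟨M, .cons (hstep.of_rootedIsom e) htail, .refl M⟩

section Unfolding

variable (N : IMLN X Λ) (u v₁ v₂ : N.V)

@[simp] def unfoldingArc : N.V ⊕ {v // N.Reaches u v} → N.V ⊕ {v // N.Reaches u v} → Prop
  | .inl a, .inl b => (N.Arc a b ∧ b ≠ u) ∨ (a = v₁ ∧ b = u)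
  | .inl a, .inr b => a = v₂ ∧ b.1 = u
  | .inr _, .inl _ => False
  | .inr a, .inr b => N.Arc a.1 b.1

/-- The explicit unfolding `U(N,u)`: `Sum.inl` is `N` itself, in which `u` keeps only the
parent `v₁`, and `Sum.inr` is the copy of `N(u)`, hanging from `v₂`. -/
noncomputable abbrev unfolding : IMLN X Λ where
  V := N.V ⊕ {v // N.Reaches u v}
  fintypeV := .ofFinite _
  Arc := unfoldingArc N u v₁ v₂
  root := .inl N.root
  leafLabel := Sum.elim N.leafLabel fun b => N.leafLabel b.1
  retLabel := Sum.elim N.retLabel fun b => N.retLabel b.1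

variable {N u v₁ v₂}

theorem unfolding_arc_inl {a b : N.V} (hab : N.Arc a b) (hbu : b ≠ u) :
    (N.unfolding u v₁ v₂).Arc (.inl a) (.inl b) :=
  .inl ⟨hab, hbu⟩

open Classical in
theorem isUnfoldAt_unfolding (hv12 : v₁ ≠ v₂) (hv₁ : N.Arc v₁ u) (hv₂ : N.Arc v₂ u) :
    IsUnfoldAt N (N.unfolding u v₁ v₂) u := by
  set copy : N.V → (N.unfolding u v₁ v₂).V := fun a =>
    if h : N.Reaches u a then .inr ⟨a, h⟩ else .inl a with hcopy
  have copy_of {a : N.V} (h : N.Reaches u a) : copy a = .inr ⟨a, h⟩ := dif_pos h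
  have inr_eq_copy {s : {v // N.Reaches u v}} {a : N.V} : .inr s = copy a ↔ s.1 = a := by
    by_cases h : N.Reaches u a
    · simp [copy_of h, Subtype.ext_iff]
    · simp only [hcopy, dif_neg h, reduceCtorEq, false_iff]
      rintro rfl
      exact h s.2
  have inl_eq_copy {c a : N.V} : .inl c = copy a ↔ c = a ∧ ¬ N.Reaches u a := by
    by_cases h : N.Reaches u a
    · simp [copy_of h, h]
    · simp [hcopy, h]
  clear_value copy
  clear hcopy
  refine ⟨.inl, copy, Sum.inl_injective, ?_, ?_, ?_, rfl, fun _ => rfl, fun _ => rfl, ?_, ?_,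
    v₁, v₂, hv12, hv₁, hv₂, ?_⟩
  · intro a b ha hb hab
    simpa [copy_of ha, copy_of hb] using hab
  · intro a b hb
    simp [copy_of hb]
  · rintro (a | ⟨a, ha⟩)
    · exact .inl ⟨a, rfl⟩
    · exact .inr ⟨a, ha, (copy_of ha).symm⟩
  · intro a ha
    simp [copy_of ha]
  · intro a ha
    simp [copy_of ha]
  · rintro (a | ⟨a, ha⟩) (b | ⟨b, hb⟩) <;>
      simp [*] <;> tauto

theorem IsUnfoldAt.exists_rootedIsom {M : IMLN X Λ} (h : IsUnfoldAt N M u) :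
    ∃ v₁ v₂, v₁ ≠ v₂ ∧ N.Arc v₁ u ∧ N.Arc v₂ u ∧ RootedIsom (N.unfolding u v₁ v₂) M := by
  obtain ⟨g, g', hg, hg', hdisj, hcover, hroot, hgleaf, hgret, hg'leaf, hg'ret,
    v₁, v₂, hv12, hv₁, hv₂, harc⟩ := h
  let F : (N.unfolding u v₁ v₂).V → M.V := Sum.elim g fun b => g' b.1
  have hF : F.Bijective := by
    refine ⟨?_, fun x => ?_⟩
    · rintro (a | ⟨a, ha⟩) (b | ⟨b, hb⟩) hab
      · exact congrArg Sum.inl (hg hab)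
      · exact absurd hab (hdisj a b hb)
      · exact absurd hab.symm (hdisj b a ha)
      · simpa using hg' a b ha hb hab
    · rcases hcover x with ⟨a, rfl⟩ | ⟨a, ha, rfl⟩
      exacts [⟨.inl a, rfl⟩, ⟨.inr ⟨a, ha⟩, rfl⟩]
  refine ⟨v₁, v₂, hv12, hv₁, hv₂, ⟨Equiv.ofBijective F hF, fun {x y} => ?_⟩, hroot, ?_, ?_⟩
  · have hgF (a : N.V) : g a = F (.inl a) := rfl
    have hg'F {a : N.V} (ha : N.Reaches u a) : g' a = F (.inr ⟨a, ha⟩) := rfl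
    simp only [Equiv.ofBijective_apply, harc]
    constructor
    · rintro (⟨a, b, hab, hbu, hx, hy⟩ | ⟨a, b, ha, hb, hab, hx, hy⟩ | ⟨hx, hy⟩ | ⟨hx, hy⟩)
      · obtain rfl := hF.1 (hx.trans (hgF a))
        obtain rfl := hF.1 (hy.trans (hgF b))
        exact .inl ⟨hab, hbu⟩
      · obtain rfl := hF.1 (hx.trans (hg'F ha))
        obtain rfl := hF.1 (hy.trans (hg'F hb))
        exact hab
      · obtain rfl := hF.1 (hx.trans (hgF v₁))
        obtain rfl := hF.1 (hy.trans (hgF u))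
        exact .inr ⟨rfl, rfl⟩
      · obtain rfl := hF.1 (hx.trans (hgF v₂))
        obtain rfl := hF.1 (hy.trans (hg'F .refl))
        exact ⟨rfl, rfl⟩
    · rcases x with a | ⟨a, ha⟩ <;> rcases y with b | ⟨b, hb⟩
      · rintro (⟨hab, hbu⟩ | ⟨rfl, rfl⟩)
        exacts [.inl ⟨a, b, hab, hbu, rfl, rfl⟩, .inr (.inr (.inl ⟨rfl, rfl⟩))]
      · rintro ⟨rfl, rfl : b = u⟩
        exact .inr (.inr (.inr ⟨rfl, rfl⟩))
      · exact False.elim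
      · exact fun hab => .inr (.inl ⟨a, b, ha, hb, hab, rfl, rfl⟩)
  · rintro (a | ⟨a, ha⟩)
    exacts [hgleaf a, hg'leaf a ha]
  · rintro (a | ⟨a, ha⟩)
    exacts [hgret a, hg'ret a ha]

end Unfolding

section UnfoldingIsIMLN

variable {N : IMLN X Λ} {u v₁ v₂ : N.V}

variable (N u v₁ v₂) in
def unfoldingProj : (N.unfolding u v₁ v₂).V → N.V := Sum.elim id Subtype.val

@[simp] theorem unfoldingProj_inl (a : N.V) : unfoldingProj N u v₁ v₂ (.inl a) = a := rfl

@[simp] theorem unfoldingProj_inr (b : {v // N.Reaches u v}) :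
    unfoldingProj N u v₁ v₂ (.inr b) = b.1 := rfl

theorem arc_unfoldingProj (hv₁ : N.Arc v₁ u) (hv₂ : N.Arc v₂ u)
    {x y : (N.unfolding u v₁ v₂).V} (h : (N.unfolding u v₁ v₂).Arc x y) :
    N.Arc (unfoldingProj N u v₁ v₂ x) (unfoldingProj N u v₁ v₂ y) := by
  rcases x with a | a <;> rcases y with b | b
  · rcases h with ⟨h, -⟩ | ⟨rfl, rfl⟩
    exacts [h, hv₁]
  · obtain ⟨rfl, hb⟩ := h
    simpa [hb] using hv₂
  · exact h.elim
  · exact h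

theorem unfolding_outDeg (hu : N.IsRet u) (hv12 : v₁ ≠ v₂) (hv₁ : N.Arc v₁ u)
    (hv₂ : N.Arc v₂ u) (x : (N.unfolding u v₁ v₂).V) :
    (N.unfolding u v₁ v₂).outDeg x = N.outDeg (unfoldingProj N u v₁ v₂ x) := by
  set π := unfoldingProj N u v₁ v₂
  have hinj : Set.InjOn π {y | (N.unfolding u v₁ v₂).Arc x y} := by
    rintro (b | b) hb (c | c) hc hbc <;> rcases x with a | a <;>
      simp_all [π, Subtype.ext_iff]
  have himage : π '' {y | (N.unfolding u v₁ v₂).Arc x y} = {c | N.Arc (π x) c} := by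
    refine Set.Subset.antisymm (Set.image_subset_iff.2 fun y => arc_unfoldingProj hv₁ hv₂) ?_
    rcases x with a | a
    · intro c (hc : N.Arc a c)
      by_cases hcu : c = u
      · subst hcu
        rcases (hu.arc_iff hv12 hv₁ hv₂ a).1 hc with rfl | rfl
        exacts [⟨.inl c, .inr ⟨rfl, rfl⟩, rfl⟩, ⟨.inr ⟨c, .refl⟩, ⟨rfl, rfl⟩, rfl⟩]
      · exact ⟨.inl c, .inl ⟨hc, hcu⟩, rfl⟩
    · exact fun c hc => ⟨.inr ⟨c, a.2.tail hc⟩, hc, rfl⟩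
  rw [outDeg, outDeg, ← himage, hinj.ncard_image]

theorem unfolding_inDeg_inl {a : N.V} (ha : a ≠ u) :
    (N.unfolding u v₁ v₂).inDeg (.inl a) = N.inDeg a := by
  have : {y | (N.unfolding u v₁ v₂).Arc y (.inl a)} = .inl '' {c | N.Arc c a} := by
    ext (c | c) <;> simp [ha]
  rw [inDeg, inDeg, this, Set.ncard_image_of_injective _ Sum.inl_injective]

theorem unfolding_inDeg_inl_self : (N.unfolding u v₁ v₂).inDeg (.inl u) = 1 := by
  have : {y | (N.unfolding u v₁ v₂).Arc y (.inl u)} = {.inl v₁} := by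
    ext (c | c) <;> simp
  rw [inDeg, this, Set.ncard_singleton]

theorem unfolding_inDeg_inr (hN : N.IsIMLN) (hu : N.IsMinRet u) (b : {v // N.Reaches u v}) :
    (N.unfolding u v₁ v₂).inDeg (.inr b) = 1 := by
  by_cases hbu : b.1 = u
  · have : {y | (N.unfolding u v₁ v₂).Arc y (.inr b)} = {.inl v₂} := by
      ext (c | c) <;> simp [hbu]
      exact fun h => hN.not_reaches_of_arc h c.2
    rw [inDeg, this, Set.ncard_singleton]
  · have : {y | (N.unfolding u v₁ v₂).Arc y (.inr b)} = .inr '' {c | N.Arc c.1 b.1} := by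
      ext (c | c) <;> simp [hbu]
    rw [inDeg, this, Set.ncard_image_of_injective _ Sum.inr_injective,
      ← hu.inDeg_eq_one hN b.2 hbu, inDeg]
    refine Set.ncard_preimage_of_injective_subset_range (s := {c | N.Arc c b.1})
      Subtype.val_injective fun c hc => ?_
    exact ⟨⟨c, hu.reaches_of_arc hN b.2 hbu hc⟩, rfl⟩

theorem reaches_unfoldingProj (hv₁ : N.Arc v₁ u) (hv₂ : N.Arc v₂ u)
    {x y : (N.unfolding u v₁ v₂).V} (h : (N.unfolding u v₁ v₂).Reaches x y) :
    N.Reaches (unfoldingProj N u v₁ v₂ x) (unfoldingProj N u v₁ v₂ y) :=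
  Relation.ReflTransGen.lift (r := (N.unfolding u v₁ v₂).Arc) (unfoldingProj N u v₁ v₂)
    (fun _ _ => arc_unfoldingProj hv₁ hv₂) _ _ h

theorem unfolding_reaches_inl {z c : N.V} (hc : ¬ N.Reaches u c) (h : N.Reaches z c) :
    (N.unfolding u v₁ v₂).Reaches (.inl z) (.inl c) := by
  induction h using Relation.ReflTransGen.head_induction_on with
  | refl => exact .refl
  | @head a b hab hbc ih =>
    have hbu : b ≠ u := by
      rintro rfl
      exact hc hbc
    exact .head (unfolding_arc_inl hab hbu) ih

theorem unfolding_reaches_inl_of_reaches (hN : N.IsIMLN) {a : N.V} (h : N.Reaches u a) :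
    (N.unfolding u v₁ v₂).Reaches (.inl u) (.inl a) := by
  induction h with
  | refl => exact .refl
  | tail hub hbc ih =>
    refine ih.tail (unfolding_arc_inl hbc ?_)
    rintro rfl
    exact hN.not_reaches_of_arc hbc hub

theorem unfolding_reaches_inr {b : {v // N.Reaches u v}} {c : N.V} (h : N.Reaches b.1 c) :
    (N.unfolding u v₁ v₂).Reaches (.inr b) (.inr ⟨c, b.2.trans h⟩) := by
  induction h with
  | refl => exact .refl
  | tail _ hde ih => exact ih.tail hde

theorem unfolding_connected (hN : N.IsIMLN) (hv₁ : N.Arc v₁ u) (hv₂ : N.Arc v₂ u)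
    (x : (N.unfolding u v₁ v₂).V) : (N.unfolding u v₁ v₂).Reaches (.inl N.root) x := by
  have hparent {v : N.V} (hv : N.Arc v u) : (N.unfolding u v₁ v₂).Reaches (.inl N.root) (.inl v) :=
    unfolding_reaches_inl (hN.not_reaches_of_arc hv) (hN.connected v)
  rcases x with a | ⟨b, hb⟩
  · by_cases ha : N.Reaches u a
    · have hret : (N.unfolding u v₁ v₂).Arc (.inl v₁) (.inl u) := .inr ⟨rfl, rfl⟩
      exact ((hparent hv₁).tail hret).trans (unfolding_reaches_inl_of_reaches hN ha)
    · exact unfolding_reaches_inl ha (hN.connected a)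
  · have hcopy : (N.unfolding u v₁ v₂).Arc (.inl v₂) (.inr ⟨u, .refl⟩) := ⟨rfl, rfl⟩
    exact ((hparent hv₂).tail hcopy).trans (unfolding_reaches_inr hb)

theorem unfolding_retLabel (x : (N.unfolding u v₁ v₂).V) :
    (N.unfolding u v₁ v₂).retLabel x = N.retLabel (unfoldingProj N u v₁ v₂ x) := by
  rcases x with a | b <;> rfl

variable (hN : N.IsIMLN) (hu : N.IsMinRet u) (hv12 : v₁ ≠ v₂) (hv₁ : N.Arc v₁ u)
  (hv₂ : N.Arc v₂ u)
include hN hu hv12 hv₁ hv₂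

theorem unfolding_isRet_iff (x : (N.unfolding u v₁ v₂).V) :
    (N.unfolding u v₁ v₂).IsRet x ↔ ∃ r, x = .inl r ∧ N.IsRet r ∧ r ≠ u := by
  rcases x with a | b
  · by_cases hau : a = u
    · subst hau
      simp [IsRet, unfolding_inDeg_inl_self]
    · simp [IsRet, unfolding_inDeg_inl hau, unfolding_outDeg hu.1 hv12 hv₁ hv₂, hau]
  · simp [IsRet, unfolding_inDeg_inr hN hu]

theorem isElem_unfoldingProj {y : (N.unfolding u v₁ v₂).V} (hy : (N.unfolding u v₁ v₂).IsElem y)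
    (hyu : unfoldingProj N u v₁ v₂ y ≠ u) : N.IsElem (unfoldingProj N u v₁ v₂ y) := by
  refine ⟨?_, (unfolding_outDeg hu.1 hv12 hv₁ hv₂ y).symm.trans hy.2⟩
  rcases y with a | b
  · exact (unfolding_inDeg_inl hyu).symm.trans_le hy.1
  · exact (hu.inDeg_eq_one hN b.2 hyu).le

theorem unfolding_isIMLN : (N.unfolding u v₁ v₂).IsIMLN where
  acyclic x hx := hN.acyclic _ <| Relation.TransGen.lift (r := (N.unfolding u v₁ v₂).Arc)
    (unfoldingProj N u v₁ v₂) (fun _ _ => arc_unfoldingProj hv₁ hv₂) _ _ hx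
  rootIn := (unfolding_inDeg_inl (hu.1.ne_root hN).symm).trans hN.rootIn
  rootOut := by simpa [unfolding_outDeg hu.1 hv12 hv₁ hv₂] using hN.rootOut
  uniqueRoot := by
    rintro (a | b) h
    · by_cases hau : a = u
      · subst hau
        simp [unfolding_inDeg_inl_self] at h
      · rw [unfolding_inDeg_inl hau] at h
        exact congrArg Sum.inl (hN.uniqueRoot a h)
    · simp [unfolding_inDeg_inr hN hu] at h
  connected := unfolding_connected hN hv₁ hv₂
  degrees := by
    rintro (a | b) hx
    · by_cases hau : a = u
      · subst hau
        refine .inl ⟨unfolding_inDeg_inl_self, ?_⟩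
        rw [unfolding_outDeg hu.1 hv12 hv₁ hv₂, unfoldingProj_inl]
        have := hN.outDeg_le_two a
        omega
      · rw [unfolding_inDeg_inl hau, unfolding_outDeg hu.1 hv12 hv₁ hv₂]
        exact hN.degrees a fun h => hx (congrArg Sum.inl h)
    · refine .inl ⟨unfolding_inDeg_inr hN hu b, ?_⟩
      rw [unfolding_outDeg hu.1 hv12 hv₁ hv₂, unfoldingProj_inr]
      have := hN.outDeg_le_two b.1
      omega
  leafSurj x := by
    obtain ⟨v, hv, rfl⟩ := hN.leafSurj x
    exact ⟨.inl v, (unfolding_outDeg hu.1 hv12 hv₁ hv₂ _).trans hv, rfl⟩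
  retInj x y hx hy hl := by
    obtain ⟨r, rfl, hr, -⟩ := (unfolding_isRet_iff hN hu hv12 hv₁ hv₂ x).1 hx
    obtain ⟨s, rfl, hs, -⟩ := (unfolding_isRet_iff hN hu hv12 hv₁ hv₂ y).1 hy
    exact congrArg Sum.inl (hN.retInj r s hr hs hl)
  retElemLabels x y hx hy := by
    obtain ⟨r, rfl, hr, hru⟩ := (unfolding_isRet_iff hN hu hv12 hv₁ hv₂ x).1 hx
    rw [unfolding_retLabel, unfolding_retLabel]
    by_cases hyu : unfoldingProj N u v₁ v₂ y = u
    · rw [hyu]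
      exact fun h => hru (hN.retInj r u hr hu.1 h)
    · exact hN.retElemLabels r _ hr (isElem_unfoldingProj hN hu hv12 hv₁ hv₂ hy hyu)

theorem unfolding_isMinRet {w : N.V} (hw : N.IsMinRet w) (hwu : w ≠ u) :
    (N.unfolding u v₁ v₂).IsMinRet (.inl w) := by
  refine ⟨(unfolding_isRet_iff hN hu hv12 hv₁ hv₂ _).2 ⟨w, rfl, hw.1, hwu⟩, fun x hx hwx => ?_⟩
  obtain ⟨r, rfl, hr, -⟩ := (unfolding_isRet_iff hN hu hv12 hv₁ hv₂ x).1 hx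
  exact congrArg Sum.inl (hw.2 r hr (reaches_unfoldingProj hv₁ hv₂ hwx))

end UnfoldingIsIMLN

section Swap

variable {N : IMLN X Λ} {u p q : N.V}

open Classical in
theorem rootedIsom_unfolding_swap (hN : N.IsIMLN) (hu : N.IsMinRet u) (hp : N.Arc p u)
    (hq : N.Arc q u) : RootedIsom (N.unfolding u p q) (N.unfolding u q p) := by
  -- `N(u)` and its copy exchange their roles.
  let F : (N.unfolding u p q).V → (N.unfolding u q p).V
    | .inl a => if h : N.Reaches u a then .inr ⟨a, h⟩ else .inl a
    | .inr b => .inl b.1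
  have hF : F.Involutive := by
    rintro (a | ⟨a, ha⟩)
    · by_cases ha : N.Reaches u a <;> simp [F, ha]
    · simp [F, ha]
  have hroot : ¬ N.Reaches u N.root := fun h => hu.1.ne_root hN (hN.eq_root_of_reaches_root h)
  have hpu : ¬ N.Reaches u p := hN.not_reaches_of_arc hp
  have hqu : ¬ N.Reaches u q := hN.not_reaches_of_arc hq
  refine ⟨⟨hF.toPerm, fun {x y} => ?_⟩, by simp [F, hroot], ?_, ?_⟩
  · have hdown {a b : N.V} (ha : N.Reaches u a) (hab : N.Arc a b) : N.Reaches u b := ha.tail hab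
    have hup {a b : N.V} (hb : N.Reaches u b) (hbu : b ≠ u) (hab : N.Arc a b) : N.Reaches u a :=
      hu.reaches_of_arc hN hb hbu hab
    have hback {a : N.V} (ha : N.Reaches u a) : ¬ N.Arc a u := fun h => hN.not_reaches_of_arc h ha
    have huu : N.Reaches u u := .refl
    rcases x with a | ⟨a, ha⟩ <;> rcases y with b | ⟨b, hb⟩ <;>
      simp only [Function.Involutive.coe_toPerm, F] <;> (try split_ifs) <;> simp <;> grind
  all_goals
    rintro (a | b) <;> simp only [RelIso.coe_fn_mk, Function.Involutive.coe_toPerm, F] <;>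
      (try split_ifs) <;> rfl

end Swap

section Comm

variable {N : IMLN X Λ} {u w p₁ p₂ q₁ q₂ : N.V}

theorem not_unfolding_reaches_inl_inr (hN : N.IsIMLN) (hu : N.IsMinRet u) (hw : N.IsMinRet w)
    (hne : u ≠ w) (hp₁ : N.Arc p₁ u) (hp₂ : N.Arc p₂ u) {s : {v // N.Reaches u v}} :
    ¬ (N.unfolding u p₁ p₂).Reaches (.inl w) (.inr s) := fun h =>
  hu.not_reaches_of_reaches hN hw hne (reaches_unfoldingProj hp₁ hp₂ h) s.2

variable (hN : N.IsIMLN) (hu : N.IsMinRet u) (hw : N.IsMinRet w) (hne : u ≠ w)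
  (hp₁ : N.Arc p₁ u) (hp₂ : N.Arc p₂ u) (hq₁ : N.Arc q₁ w) (hq₂ : N.Arc q₂ w)

/-- On both sides the nodes are those of `N`, a copy of `N(u)` and a copy of `N(w)`; the map only
re-tags them. Since `N(u)` and `N(w)` are disjoint, no copy of `N(u)` lies inside the copy of
`N(w)`, which makes the last case empty. -/
def unfoldingCommMap :
    ((N.unfolding u p₁ p₂).unfolding (.inl w) (.inl q₁) (.inl q₂)).V →
      ((N.unfolding w q₁ q₂).unfolding (.inl u) (.inl p₁) (.inl p₂)).V
  | .inl (.inl a) => .inl (.inl a)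
  | .inl (.inr s) =>
      .inr ⟨.inl s.1, unfolding_reaches_inl (hw.not_reaches_of_reaches hN hu hne.symm s.2) s.2⟩
  | .inr ⟨.inl c, h⟩ => .inl (.inr ⟨c, reaches_unfoldingProj hp₁ hp₂ h⟩)
  | .inr ⟨.inr _, h⟩ => absurd h (not_unfolding_reaches_inl_inr hN hu hw hne hp₁ hp₂)

include hN hu hw hne hp₁ hp₂ hq₁ hq₂ in
theorem unfoldingCommMap_leftInverse :
    Function.LeftInverse (unfoldingCommMap hN hw hu hne.symm hq₁ hq₂)
      (unfoldingCommMap hN hu hw hne hp₁ hp₂) := by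
  rintro ((a | s) | ⟨c | s, h⟩)
  · rfl
  · rfl
  · rfl
  · exact absurd h (not_unfolding_reaches_inl_inr hN hu hw hne hp₁ hp₂)

include hN hu hw hne hp₁ hp₂ hq₁ hq₂ in
theorem rootedIsom_unfolding_comm :
    RootedIsom ((N.unfolding u p₁ p₂).unfolding (.inl w) (.inl q₁) (.inl q₂))
      ((N.unfolding w q₁ q₂).unfolding (.inl u) (.inl p₁) (.inl p₂)) := by
  let F := unfoldingCommMap (q₁ := q₁) (q₂ := q₂) hN hu hw hne hp₁ hp₂
  let G := unfoldingCommMap (q₁ := p₁) (q₂ := p₂) hN hw hu hne.symm hq₁ hq₂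
  have hF : Function.LeftInverse G F := unfoldingCommMap_leftInverse hN hu hw hne hp₁ hp₂ hq₁ hq₂
  have hG : Function.LeftInverse F G :=
    unfoldingCommMap_leftInverse hN hw hu hne.symm hq₁ hq₂ hp₁ hp₂
  have hnr {s} := not_unfolding_reaches_inl_inr hN hu hw hne hp₁ hp₂ (s := s)
  refine ⟨⟨⟨F, G, hF, hG⟩, fun {x y} => ?_⟩, rfl, ?_, ?_⟩
  · have huw {c : N.V} (h : N.Reaches u c) : c ≠ w := by
      rintro rfl
      exact hw.not_reaches_of_reaches hN hu hne.symm h .refl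
    have hwu {c : N.V} (h : (N.unfolding u p₁ p₂).Reaches (.inl w) (.inl c)) : c ≠ u := by
      rintro rfl
      exact hu.not_reaches_of_reaches hN hw hne (reaches_unfoldingProj hp₁ hp₂ h) .refl
    rcases x with (a | s) | ⟨c | s, h⟩ <;> rcases y with (b | t) | ⟨d | t, h'⟩
    all_goals first | exact absurd h hnr | exact absurd h' hnr | skip
    all_goals simp [F, unfoldingCommMap]
    all_goals grind
  all_goals
    rintro ((a | s) | ⟨c | s, h⟩)
    · rfl
    · rfl
    · rfl
    · exact absurd h hnr

end Comm

section Sequences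

variable {K K₁ M M₁ M₂ : IMLN X Λ} {l l₁ l₂ : Λ}

theorem IsMinRet.unfoldStep {u v₁ v₂ : K.V} (hu : K.IsMinRet u) (hv12 : v₁ ≠ v₂)
    (hv₁ : K.Arc v₁ u) (hv₂ : K.Arc v₂ u) : UnfoldStep K (K.unfolding u v₁ v₂) (K.retLabel u) :=
  ⟨u, hu, rfl, isUnfoldAt_unfolding hv12 hv₁ hv₂⟩

theorem UnfoldStep.exists_rootedIsom (h : UnfoldStep K M l) :
    ∃ u v₁ v₂, K.IsMinRet u ∧ K.retLabel u = l ∧ v₁ ≠ v₂ ∧ K.Arc v₁ u ∧ K.Arc v₂ u ∧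
      RootedIsom (K.unfolding u v₁ v₂) M := by
  obtain ⟨u, hu, hul, h⟩ := h
  obtain ⟨v₁, v₂, hv12, hv₁, hv₂, e⟩ := h.exists_rootedIsom
  exact ⟨u, v₁, v₂, hu, hul, hv12, hv₁, hv₂, e⟩

theorem UnfoldStep.isIMLN (hK : K.IsIMLN) (h : UnfoldStep K M l) : M.IsIMLN := by
  obtain ⟨u, v₁, v₂, hu, -, hv12, hv₁, hv₂, e⟩ := h.exists_rootedIsom
  exact e.isIMLN (unfolding_isIMLN hK hu hv12 hv₁ hv₂)

theorem UnfoldStep.rootedIsom (hK : K.IsIMLN) (h₁ : UnfoldStep K M₁ l)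
    (h₂ : UnfoldStep K M₂ l) : RootedIsom M₁ M₂ := by
  obtain ⟨u, p, q, hu, hul, hpq, hp, hq, e₁⟩ := h₁.exists_rootedIsom
  obtain ⟨u', p', q', hu', hul', hpq', hp', hq', e₂⟩ := h₂.exists_rootedIsom
  obtain rfl : u' = u := hK.retInj u' u hu'.1 hu.1 (hul'.trans hul.symm)
  have hpar := hu.1.arc_iff hpq hp hq
  refine e₁.symm.trans (RootedIsom.trans ?_ e₂)
  rcases (hpar p').1 hp' with rfl | rfl <;> rcases (hpar q').1 hq' with rfl | rfl
  · exact absurd rfl hpq'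
  · exact .refl _
  · exact rootedIsom_unfolding_swap hK hu hp hq
  · exact absurd rfl hpq'

theorem UnfoldStep.exists_isMinRet (hK : K.IsIMLN) (h : UnfoldStep K M l) {w : K.V}
    (hw : K.IsMinRet w) (hwl : K.retLabel w ≠ l) :
    ∃ w' : M.V, M.IsMinRet w' ∧ M.retLabel w' = K.retLabel w := by
  obtain ⟨u, v₁, v₂, hu, rfl, hv12, hv₁, hv₂, f, -, -, hret⟩ := h.exists_rootedIsom
  have hwu : w ≠ u := by
    rintro rfl
    exact hwl rfl
  exact ⟨f (.inl w), (isMinRet_relIso_iff f _).2 (unfolding_isMinRet hK hu hv12 hv₁ hv₂ hw hwu),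
    hret _⟩

theorem UnfoldStep.comm (hK : K.IsIMLN) (h₁ : UnfoldStep K K₁ l₁) (h₁₂ : UnfoldStep K₁ M l₂)
    {w : K.V} (hw : K.IsMinRet w) (hwl : K.retLabel w = l₂) (hne : l₁ ≠ l₂) :
    ∃ K₂ M', UnfoldStep K K₂ l₂ ∧ UnfoldStep K₂ M' l₁ ∧ RootedIsom M M' := by
  obtain ⟨u, p, q, hu, rfl, hpq, hp, hq, e₁⟩ := h₁.exists_rootedIsom
  obtain ⟨q₁, q₂, hq12, hq₁, hq₂⟩ := hw.1.exists_parents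
  have hwu : w ≠ u := by
    rintro rfl
    exact hne hwl
  have hAw : UnfoldStep (K.unfolding u p q) _ l₂ := hwl ▸
    (unfolding_isMinRet hK hu hpq hp hq hw hwu).unfoldStep (by simpa using hq12)
      (unfolding_arc_inl hq₁ hwu) (unfolding_arc_inl hq₂ hwu)
  have e₂ := (h₁₂.of_rootedIsom e₁.symm).rootedIsom (unfolding_isIMLN hK hu hpq hp hq) hAw
  refine ⟨_, _, hwl ▸ hw.unfoldStep hq12 hq₁ hq₂,
    (unfolding_isMinRet hK hw hq12 hq₁ hq₂ hu hwu.symm).unfoldStep (by simpa using hpq)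
      (unfolding_arc_inl hp hwu.symm) (unfolding_arc_inl hq hwu.symm),
    e₂.trans (rootedIsom_unfolding_comm hK hu hw hwu.symm hp hq hq₁ hq₂)⟩

theorem IsUnfoldSeq.exists_cons_erase [DecidableEq Λ] {ls : List Λ} (h : IsUnfoldSeq K ls M)
    (hK : K.IsIMLN) {w : K.V} (hw : K.IsMinRet w) (hl : K.retLabel w ∈ ls) :
    ∃ M', IsUnfoldSeq K (K.retLabel w :: ls.erase (K.retLabel w)) M' ∧ RootedIsom M M' := by
  induction h with
  | nil => exact absurd hl List.not_mem_nil
  | @cons K K₁ M l₁ ls hstep htail ih =>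
    by_cases hl₁ : l₁ = K.retLabel w
    · subst hl₁
      exact ⟨M, by simpa using IsUnfoldSeq.cons hstep htail, .refl M⟩
    · obtain ⟨w', hw', hw'l⟩ := hstep.exists_isMinRet hK hw (Ne.symm hl₁)
      have hl' : K₁.retLabel w' ∈ ls := by
        rw [hw'l]
        exact (List.mem_cons.1 hl).resolve_left (Ne.symm hl₁)
      obtain ⟨M', hseq, e⟩ := ih (hstep.isIMLN hK) hw' hl'
      rw [hw'l] at hseq
      cases hseq with
      | cons h₂ htail' =>
        obtain ⟨K₂, M₂, hK₂, hM₂, e₂⟩ := hstep.comm hK h₂ hw rfl hl₁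
        obtain ⟨M'', hseq'', e''⟩ := htail'.exists_of_rootedIsom e₂
        refine ⟨M'', ?_, e.trans e''⟩
        rw [List.erase_cons_tail (by simpa using hl₁)]
        exact .cons hK₂ (.cons hM₂ hseq'')

theorem IsUnfoldSeq.rootedIsom_of_perm [DecidableEq Λ] {ls ls' : List Λ} {M' : IMLN X Λ}
    (h : IsUnfoldSeq K ls M) (h' : IsUnfoldSeq K ls' M') (hK : K.IsIMLN) (hp : ls.Perm ls') :
    RootedIsom M M' := by
  induction h generalizing ls' M' with
  | nil N =>
    obtain rfl := hp.nil_eq.symm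
    cases h'
    exact .refl N
  | @cons K K₁ M l ls hstep htail ih =>
    obtain ⟨u, hu, rfl, -⟩ := id hstep
    obtain ⟨M'', hseq, e⟩ := h'.exists_cons_erase hK hu (hp.subset List.mem_cons_self)
    cases hseq with
    | cons hstep' htail' =>
      obtain ⟨M₃, hseq₃, e₃⟩ := htail'.exists_of_rootedIsom (hstep'.rootedIsom hK hstep)
      have hp' : ls.Perm (ls'.erase (K.retLabel u)) :=
        (hp.trans (List.perm_cons_erase (hp.subset List.mem_cons_self))).cons_inv
      exact (ih hseq₃ (hstep.isIMLN hK) hp').trans (e₃.symm.trans e.symm)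

end Sequences

end IMLN

theorem IMLN.equivalent_unfold_seq_isom_general (X Λ : Type) (N : IMLN X Λ) (hN : N.IsIMLN)
    (us vs : List N.V)
    (hndus : us.Nodup) (hndvs : vs.Nodup)
    (hequiv : ∀ u : N.V, u ∈ us ↔ u ∈ vs)
    (M M' : IMLN X Λ)
    (hM : IMLN.IsUnfoldSeq N (us.map N.retLabel) M)
    (hM' : IMLN.IsUnfoldSeq N (vs.map N.retLabel) M') :
    IMLN.Isom M M' := by
  classical
  have hperm : us.Perm vs := (List.perm_ext_iff_of_nodup hndus hndvs).2 hequiv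
  exact (hM.rootedIsom_of_perm hM' hN (hperm.map N.retLabel)).isom

/-- **Corollary (unf-order).** Let `N` be an IMLN and let `us`, `vs` be two
equivalent compatible sequences of elements of `R(N)` (same set of nodes), with
associated sequences of unfoldings ending in `M` and `M'` respectively.  Then `M`
and `M'` are isomorphic. -/
theorem IMLN.equivalent_unfold_seq_isom (X Λ : Type) (N : IMLN X Λ) (hN : N.IsIMLN)
    (us vs : List N.V)
    (hus : ∀ u ∈ us, N.IsRet u) (hvs : ∀ u ∈ vs, N.IsRet u)
    (hndus : us.Nodup) (hndvs : vs.Nodup)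
    (hequiv : ∀ u : N.V, u ∈ us ↔ u ∈ vs)
    (M M' : IMLN X Λ)
    (hM : IMLN.IsUnfoldSeq N (us.map N.retLabel) M)
    (hM' : IMLN.IsUnfoldSeq N (vs.map N.retLabel) M') :
    IMLN.Isom M M' :=
  IMLN.equivalent_unfold_seq_isom_general X Λ N hN us vs hndus hndvs hequiv M M' hM hM'
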